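/- Let Φ and Θ be finite-dimensional real inner product spaces. Let f : Φ × Θ → ℝ and g : Θ → ℝ be differentiable, suppose g attains its infimum g* = inf_θ g(θ), suppose g satisfies the PL inequality with constant μ > 0 (‖∇g(θ)‖² ≥ (1/μ)(g(θ) - g*) for all θ), and suppose for every φ the map θ ↦ f(φ, θ) is L-Lipschitz (L > 0). Fix γ > 0 and set F_γ(φ, θ) = f(φ, θ) + γ g(θ). If (φ̂, θ̂) is a stationary point of F_γ (i.e., the total derivative of F_γ at (φ̂, θ̂) vanishes), then the lower-level suboptimality is bounded by g(θ̂) - g* ≤ μ L² / γ². -/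

import Mathlib

/-!
Stationarity in `θ` gives `γ ∇g(θ̂) = -∇_θ f(φ̂, θ̂)`, and the Lipschitz bound on `f(φ̂, ·)` caps
the right-hand side at `L`, so `‖∇g(θ̂)‖ ≤ L / γ`; the PL inequality converts this into the bound
on `g(θ̂) - g*`.
-/

open InnerProductSpace

theorem norm_gradient_eq_norm_fderiv {Θ : Type*} [NormedAddCommGroup Θ] [InnerProductSpace ℝ Θ]
    [CompleteSpace Θ] (g : Θ → ℝ) (θ : Θ) : ‖gradient g θ‖ = ‖fderiv ℝ g θ‖ := by
  rw [← toDual_gradient, LinearIsometryEquiv.norm_map]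

theorem hasFDerivAt_prodMk_right_zero_of_fderiv_eq_zero {𝕜 E F G : Type*} [NontriviallyNormedField 𝕜]
    [NormedAddCommGroup E] [NormedSpace 𝕜 E] [NormedAddCommGroup F] [NormedSpace 𝕜 F]
    [NormedAddCommGroup G] [NormedSpace 𝕜 G] {Ψ : E × F → G} {x : E} {y : F}
    (hΨ : DifferentiableAt 𝕜 Ψ (x, y)) (hstat : fderiv 𝕜 Ψ (x, y) = 0) :
    HasFDerivAt (fun y => Ψ (x, y)) (0 : F →L[𝕜] G) y := by
  simpa using (hstat ▸ hΨ.hasFDerivAt).comp y (hasFDerivAt_prodMk_right x y)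

theorem norm_le_div_of_add_smul_eq_zero {E : Type*} [SeminormedAddCommGroup E] [NormedSpace ℝ E]
    {a b : E} {γ L : ℝ} (hγ : 0 < γ) (ha : ‖a‖ ≤ L) (hab : a + γ • b = 0) : ‖b‖ ≤ L / γ := by
  rw [le_div_iff₀' hγ, ← Real.norm_of_nonneg hγ.le, ← norm_smul, eq_neg_of_add_eq_zero_right hab,
    norm_neg]
  exact ha

theorem stationary_point_constraint_violation_bound_general
    {Φ Θ : Type*} [NormedAddCommGroup Φ] [InnerProductSpace ℝ Φ]
    [NormedAddCommGroup Θ] [InnerProductSpace ℝ Θ] [FiniteDimensional ℝ Θ]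
    (f : Φ × Θ → ℝ) (g : Θ → ℝ)
    (hf : Differentiable ℝ f) (hg : Differentiable ℝ g)
    (gstar : ℝ)
    (μ : ℝ) (hμ : 0 < μ)
    (hPL : ∀ θ : Θ, ‖gradient g θ‖ ^ 2 ≥ (1 / μ) * (g θ - gstar))
    (L : ℝ) (hL : 0 < L)
    (hfLip : ∀ (φ : Φ) (θ₁ θ₂ : Θ), |f (φ, θ₁) - f (φ, θ₂)| ≤ L * ‖θ₁ - θ₂‖)
    (γ : ℝ) (hγ : 0 < γ)
    (Fγ : Φ × Θ → ℝ) (hFγ : ∀ p : Φ × Θ, Fγ p = f p + γ * g p.2)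
    (φhat : Φ) (θhat : Θ) (hstat : fderiv ℝ Fγ (φhat, θhat) = 0) :
    g θhat - gstar ≤ μ * L ^ 2 / γ ^ 2 := by
  obtain rfl : Fγ = fun p => f p + γ * g p.2 := funext hFγ
  set h : Θ → ℝ := fun θ => f (φhat, θ)
  have hh : DifferentiableAt ℝ h θhat := by fun_prop
  have hpartial : HasFDerivAt (fun θ => h θ + γ * g θ) (0 : Θ →L[ℝ] ℝ) θhat :=
    hasFDerivAt_prodMk_right_zero_of_fderiv_eq_zero (by fun_prop) hstat
  have hsum : fderiv ℝ h θhat + γ • fderiv ℝ g θhat = 0 :=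
    (hh.hasFDerivAt.add ((hg θhat).hasFDerivAt.const_mul γ)).unique hpartial
  have hh_norm : ‖fderiv ℝ h θhat‖ ≤ L :=
    norm_fderiv_le_of_lip' ℝ hL.le (.of_forall fun θ => hfLip φhat θ θhat)
  have hgrad : ‖gradient g θhat‖ ≤ L / γ := by
    rw [norm_gradient_eq_norm_fderiv]
    exact norm_le_div_of_add_smul_eq_zero hγ hh_norm hsum
  have hgrad_sq : ‖gradient g θhat‖ ^ 2 ≤ (L / γ) ^ 2 := by gcongr
  calc g θhat - gstar ≤ μ * (L / γ) ^ 2 := by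
        have := (hPL θhat).trans hgrad_sq
        rwa [one_div, inv_mul_le_iff₀ hμ] at this
    _ = μ * L ^ 2 / γ ^ 2 := by ring

/-- **Constraint-violation bound at stationary points of the penalized objective**
(key intermediate step in the proof of Lemma 1): if `g` satisfies the PL inequality
with constant `μ`, `f(φ, ·)` is `L`-Lipschitz for every `φ`, and `(φ̂, θ̂)` is a
stationary point of `F_γ = f + γ g` (its total derivative vanishes), then
`g(θ̂) - g* ≤ μ L² / γ²`. -/
theorem stationary_point_constraint_violation_bound
    {Φ Θ : Type*} [NormedAddCommGroup Φ] [InnerProductSpace ℝ Φ] [FiniteDimensional ℝ Φ]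
    [NormedAddCommGroup Θ] [InnerProductSpace ℝ Θ] [FiniteDimensional ℝ Θ]
    (f : Φ × Θ → ℝ) (g : Θ → ℝ)
    (hf : Differentiable ℝ f) (hg : Differentiable ℝ g)
    (gstar : ℝ) (hglb : IsGLB (Set.range g) gstar) (hatt : ∃ θ₀ : Θ, g θ₀ = gstar)
    (μ : ℝ) (hμ : 0 < μ)
    (hPL : ∀ θ : Θ, ‖gradient g θ‖ ^ 2 ≥ (1 / μ) * (g θ - gstar))
    (L : ℝ) (hL : 0 < L)
    (hfLip : ∀ (φ : Φ) (θ₁ θ₂ : Θ), |f (φ, θ₁) - f (φ, θ₂)| ≤ L * ‖θ₁ - θ₂‖)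
    (γ : ℝ) (hγ : 0 < γ)
    (Fγ : Φ × Θ → ℝ) (hFγ : ∀ p : Φ × Θ, Fγ p = f p + γ * g p.2)
    (φhat : Φ) (θhat : Θ) (hstat : fderiv ℝ Fγ (φhat, θhat) = 0) :
    g θhat - gstar ≤ μ * L ^ 2 / γ ^ 2 :=
  stationary_point_constraint_violation_bound_general f g hf hg gstar μ hμ hPL L hL hfLip γ hγ Fγ
    hFγ φhat θhat hstat
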